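/- Let L = Log(𝓕_L) with 𝓕_L a finite set of finite pointed frames, let φ be a modal formula and σ ⊆ sig(φ). Then for every modal formula χ with sig(χ) ⊆ σ, the following are equivalent: (1) χ is a strongest L(σ)-implicate of φ; (2) for every model (M,w) based on some (F,w) ∈ 𝓕_L: M,w ⊨ χ if and only if there exist (F',w') ∈ 𝓕_L and a model (M',w') based on (F',w') such that M',w' ∼_σ M,w and M',w' ⊨ φ. -/

import Mathlib

inductive MForm (α : Type) : Type
  | top : MForm α
  | atom : α → MForm α
  | neg : MForm α → MForm α
  | and : MForm α → MForm α → MForm α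
  | box : MForm α → MForm α
deriving DecidableEq

namespace MForm

def imp {α : Type} (φ ψ : MForm α) : MForm α := neg (and φ (neg ψ))

def dia {α : Type} (φ : MForm α) : MForm α := neg (box (neg φ))

def sig {α : Type} [DecidableEq α] : MForm α → Finset α
  | top => ∅
  | atom p => {p}
  | neg φ => sig φ
  | and φ ψ => sig φ ∪ sig ψ
  | box φ => sig φ

def IsProp {α : Type} : MForm α → Prop
  | top => True
  | atom _ => True
  | neg φ => IsProp φ
  | and φ ψ => IsProp φ ∧ IsProp ψ
  | box _ => False

def subf {α : Type} [DecidableEq α] : MForm α → Finset (MForm α)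
  | top => {top}
  | atom p => {atom p}
  | neg φ => insert (neg φ) (subf φ)
  | and φ ψ => insert (and φ ψ) (subf φ ∪ subf ψ)
  | box φ => insert (box φ) (subf φ)

/-- The dag-size of a formula: the number of its distinct subformulas. -/
def dagSize {α : Type} [DecidableEq α] (φ : MForm α) : ℕ := (subf φ).card

end MForm

def psat {α : Type} (v : α → Prop) : MForm α → Prop
  | .top => True
  | .atom p => v p
  | .neg φ => ¬ psat v φ
  | .and φ ψ => psat v φ ∧ psat v ψ
  | .box _ => True

/-- Propositional tautology. -/
def PTaut {α : Type} (φ : MForm α) : Prop := ∀ v : α → Prop, psat v φ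

def bigAnd {α : Type} : List (MForm α) → MForm α
  | [] => .top
  | φ :: l => .and φ (bigAnd l)

def bigOr {α : Type} (l : List (MForm α)) : MForm α := .neg (bigAnd (l.map .neg))

def boxIter {α : Type} : ℕ → MForm α → MForm α
  | 0, φ => φ
  | n + 1, φ => .box (boxIter n φ)

def diaIter {α : Type} : ℕ → MForm α → MForm α
  | 0, φ => φ
  | n + 1, φ => MForm.dia (diaIter n φ)

/-- `□^{≤n} φ`. -/
def ble {α : Type} (n : ℕ) (φ : MForm α) : MForm α :=
  bigAnd ((List.range (n + 1)).map (fun k => boxIter k φ))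

/-- `◇^{≤n} φ`. -/
def dle {α : Type} (n : ℕ) (φ : MForm α) : MForm α := .neg (ble n (.neg φ))

def substAtoms {α β : Type} (s : α → MForm β) : MForm α → MForm β
  | .top => .top
  | .atom a => s a
  | .neg φ => .neg (substAtoms s φ)
  | .and φ ψ => .and (substAtoms s φ) (substAtoms s ψ)
  | .box φ => .box (substAtoms s φ)

structure Frame where
  W : Type
  ne : Nonempty W
  R : W → W → Prop

structure PFrame extends Frame where
  pt : W

def sat (F : Frame) (V : F.W → ℕ → Prop) : F.W → MForm ℕ → Prop
  | w, .top => True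
  | w, .atom p => V w p
  | w, .neg φ => ¬ sat F V w φ
  | w, .and φ ψ => sat F V w φ ∧ sat F V w ψ
  | w, .box φ => ∀ v, F.R w v → sat F V v φ

def validAt (F : Frame) (w : F.W) (φ : MForm ℕ) : Prop := ∀ V, sat F V w φ

def Log (𝓕 : Set PFrame) : Set (MForm ℕ) := {φ | ∀ P ∈ 𝓕, validAt P.toFrame P.pt φ}

def Rooted (F : Frame) (w : F.W) : Prop := ∀ v, Relation.ReflTransGen F.R w v

def StrImp (L : Set (MForm ℕ)) (σ : Finset ℕ) (φ χ : MForm ℕ) : Prop :=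
  χ.sig ⊆ σ ∧ φ.imp χ ∈ L ∧
    ∀ ψ : MForm ℕ, ψ.sig ⊆ σ → φ.imp ψ ∈ L → χ.imp ψ ∈ L

def UnifInt (L : Set (MForm ℕ)) (σ : Finset ℕ) (φ χ : MForm ℕ) : Prop :=
  χ.sig ⊆ σ ∧ φ.imp χ ∈ L ∧
    ∀ ψ : MForm ℕ, ψ.sig ∩ φ.sig ⊆ σ → φ.imp ψ ∈ L → χ.imp ψ ∈ L

def CraigInt (L : Set (MForm ℕ)) (φ ψ χ : MForm ℕ) : Prop :=
  φ.imp χ ∈ L ∧ χ.imp ψ ∈ L ∧ χ.sig ⊆ φ.sig ∩ ψ.sig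

def HasCIP (L : Set (MForm ℕ)) : Prop :=
  ∀ φ ψ : MForm ℕ, φ.imp ψ ∈ L → ∃ χ, CraigInt L φ ψ χ

def IsBisim (σ : Finset ℕ) (F₁ : Frame) (V₁ : F₁.W → ℕ → Prop)
    (F₂ : Frame) (V₂ : F₂.W → ℕ → Prop) (Z : F₁.W → F₂.W → Prop) : Prop :=
  (∀ w₁ w₂, Z w₁ w₂ → ∀ p ∈ σ, (V₁ w₁ p ↔ V₂ w₂ p)) ∧
  (∀ w₁ w₂ v₁, Z w₁ w₂ → F₁.R w₁ v₁ → ∃ v₂, F₂.R w₂ v₂ ∧ Z v₁ v₂) ∧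
  (∀ w₁ w₂ v₂, Z w₁ w₂ → F₂.R w₂ v₂ → ∃ v₁, F₁.R w₁ v₁ ∧ Z v₁ v₂)

def Bisim (σ : Finset ℕ) (F₁ : Frame) (V₁ : F₁.W → ℕ → Prop) (w₁ : F₁.W)
    (F₂ : Frame) (V₂ : F₂.W → ℕ → Prop) (w₂ : F₂.W) : Prop :=
  ∃ Z, IsBisim σ F₁ V₁ F₂ V₂ Z ∧ Z w₁ w₂

def IsEME (σ : Finset ℕ) (Φ : Finset (MForm ℕ)) : Prop :=
  (∀ φ ∈ Φ, φ.IsProp ∧ φ.sig ⊆ σ) ∧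
  (∀ v : ℕ → Prop, ∃ φ ∈ Φ, psat v φ) ∧
  (∀ φ ∈ Φ, ∀ ψ ∈ Φ, φ ≠ ψ → ∀ v : ℕ → Prop, ¬ (psat v φ ∧ psat v ψ))

def IsCover (σ : Finset ℕ) (Φ : Finset (MForm ℕ)) (F : Frame) (V : F.W → ℕ → Prop) : Prop :=
  ∀ φ ∈ Φ, ∀ w₁ w₂, sat F V w₁ φ → sat F V w₂ φ →
    ∀ χ : MForm ℕ, χ.IsProp → χ.sig ⊆ σ → (sat F V w₁ χ ↔ sat F V w₂ χ)

noncomputable def coverFml (σ : Finset ℕ) (Φ : Finset (MForm ℕ)) (N : ℕ) : MForm ℕ :=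
  bigAnd (Φ.toList.map (fun φ => bigAnd (σ.toList.map (fun p =>
    MForm.imp (dle N (.and φ (.atom p))) (ble N (MForm.imp φ (.atom p)))))))

/-!
Bisimilarity and `σ`-modal equivalence coincide on finite models (Hennessy–Milner), and over the
finitely many finite frames of the family there are only finitely many models up to their
`σ`-reduct. Every such model is therefore pinned down, up to `σ`-equivalence, by a single
`σ`-formula, and the disjunction of these formulas over the reducts of the models of `φ` is a
`σ`-formula true exactly at the models `σ`-bisimilar to a model of `φ`. It is implied by `φ`,
hence by any strongest implicate `χ`; conversely every such model satisfies `χ` because `χ` is a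
bisimulation-invariant consequence of `φ`.
-/

section Semantics

variable {F : Frame} {V : F.W → ℕ → Prop} {w : F.W}

theorem sat_imp {θ η : MForm ℕ} : sat F V w (θ.imp η) ↔ (sat F V w θ → sat F V w η) := by
  simp only [MForm.imp, sat]
  tauto

theorem sat_dia {θ : MForm ℕ} : sat F V w θ.dia ↔ ∃ v, F.R w v ∧ sat F V v θ := by
  simp [MForm.dia, sat]

theorem sat_bigAnd {l : List (MForm ℕ)} : sat F V w (bigAnd l) ↔ ∀ θ ∈ l, sat F V w θ := by
  induction l with
  | nil => simp [bigAnd, sat]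
  | cons θ l ih => simp [bigAnd, sat, ih]

theorem sat_bigOr {l : List (MForm ℕ)} : sat F V w (bigOr l) ↔ ∃ θ ∈ l, sat F V w θ := by
  simp [bigOr, sat, sat_bigAnd]

end Semantics

theorem sig_bigAnd_subset {σ : Finset ℕ} {l : List (MForm ℕ)} (h : ∀ θ ∈ l, θ.sig ⊆ σ) :
    (bigAnd l).sig ⊆ σ := by
  induction l with
  | nil => simp [bigAnd, MForm.sig]
  | cons θ l ih =>
    simp only [List.forall_mem_cons] at h
    exact Finset.union_subset h.1 (ih h.2)

theorem sig_bigOr_subset {σ : Finset ℕ} {l : List (MForm ℕ)} (h : ∀ θ ∈ l, θ.sig ⊆ σ) :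
    (bigOr l).sig ⊆ σ :=
  sig_bigAnd_subset (by simpa [MForm.sig] using h)

theorem mem_log_range_iff {ι : Type} {Fr : ι → PFrame} {θ : MForm ℕ} :
    θ ∈ Log (Set.range Fr) ↔ ∀ j V, sat (Fr j).toFrame V (Fr j).pt θ := by
  simp [Log, validAt]

def ModalEquiv (σ : Finset ℕ) (F₁ : Frame) (V₁ : F₁.W → ℕ → Prop) (w₁ : F₁.W)
    (F₂ : Frame) (V₂ : F₂.W → ℕ → Prop) (w₂ : F₂.W) : Prop :=
  ∀ θ : MForm ℕ, θ.sig ⊆ σ → (sat F₁ V₁ w₁ θ ↔ sat F₂ V₂ w₂ θ)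

namespace ModalEquiv

variable {σ : Finset ℕ} {F₁ F₂ F₃ : Frame} {V₁ : F₁.W → ℕ → Prop} {V₂ : F₂.W → ℕ → Prop}
  {V₃ : F₃.W → ℕ → Prop} {w₁ : F₁.W} {w₂ : F₂.W} {w₃ : F₃.W}

theorem refl : ModalEquiv σ F₁ V₁ w₁ F₁ V₁ w₁ := fun _ _ => Iff.rfl

theorem symm (h : ModalEquiv σ F₁ V₁ w₁ F₂ V₂ w₂) : ModalEquiv σ F₂ V₂ w₂ F₁ V₁ w₁ :=
  fun θ hθ => (h θ hθ).symm

theorem trans (h₁₂ : ModalEquiv σ F₁ V₁ w₁ F₂ V₂ w₂) (h₂₃ : ModalEquiv σ F₂ V₂ w₂ F₃ V₃ w₃) :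
    ModalEquiv σ F₁ V₁ w₁ F₃ V₃ w₃ :=
  fun θ hθ => (h₁₂ θ hθ).trans (h₂₃ θ hθ)

end ModalEquiv

section Bisimulation

variable {σ : Finset ℕ} {F₁ F₂ : Frame} {V₁ : F₁.W → ℕ → Prop} {V₂ : F₂.W → ℕ → Prop}

theorem IsBisim.sat_iff {Z : F₁.W → F₂.W → Prop} (hZ : IsBisim σ F₁ V₁ F₂ V₂ Z)
    {θ : MForm ℕ} (hθ : θ.sig ⊆ σ) {w₁ : F₁.W} {w₂ : F₂.W} (hw : Z w₁ w₂) :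
    sat F₁ V₁ w₁ θ ↔ sat F₂ V₂ w₂ θ := by
  induction θ generalizing w₁ w₂ with
  | top => simp [sat]
  | atom p => exact hZ.1 w₁ w₂ hw p (by simpa [MForm.sig] using hθ)
  | neg θ ih => simp only [sat, ih hθ hw]
  | and θ η ihθ ihη =>
    rw [MForm.sig, Finset.union_subset_iff] at hθ
    simp only [sat, ihθ hθ.1 hw, ihη hθ.2 hw]
  | box θ ih =>
    constructor
    · intro h v₂ hv₂
      obtain ⟨v₁, hv₁, hv⟩ := hZ.2.2 w₁ w₂ v₂ hw hv₂
      exact (ih hθ hv).mp (h v₁ hv₁)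
    · intro h v₁ hv₁
      obtain ⟨v₂, hv₂, hv⟩ := hZ.2.1 w₁ w₂ v₁ hw hv₁
      exact (ih hθ hv).mpr (h v₂ hv₂)

theorem Bisim.modalEquiv {w₁ : F₁.W} {w₂ : F₂.W} (h : Bisim σ F₁ V₁ w₁ F₂ V₂ w₂) :
    ModalEquiv σ F₁ V₁ w₁ F₂ V₂ w₂ :=
  fun _ hθ => h.choose_spec.1.sat_iff hθ h.choose_spec.2

theorem isBisim_eq_of_agreeOn {F : Frame} {V V' : F.W → ℕ → Prop}
    (h : ∀ w, ∀ p ∈ σ, (V w p ↔ V' w p)) : IsBisim σ F V F V' Eq :=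
  ⟨by rintro w _ rfl; exact h w, fun _ _ v hw hv => ⟨v, hw ▸ hv, rfl⟩,
    fun _ _ v hw hv => ⟨v, hw ▸ hv, rfl⟩⟩

theorem bisim_refl {F : Frame} (V : F.W → ℕ → Prop) (w : F.W) : Bisim σ F V w F V w :=
  ⟨Eq, isBisim_eq_of_agreeOn fun _ _ _ => Iff.rfl, rfl⟩

end Bisimulation

theorem exists_separating_formula (σ : Finset ℕ) {T : Type} [Finite T] (F : T → Frame)
    (V : ∀ t, (F t).W → ℕ → Prop) (w : ∀ t, (F t).W) (F₀ : Frame) (V₀ : F₀.W → ℕ → Prop)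
    (w₀ : F₀.W) :
    ∃ γ : MForm ℕ, γ.sig ⊆ σ ∧ sat F₀ V₀ w₀ γ ∧
      ∀ t, sat (F t) (V t) (w t) γ → ModalEquiv σ F₀ V₀ w₀ (F t) (V t) (w t) := by
  classical
  have separate : ∀ t, ∃ θ : MForm ℕ, θ.sig ⊆ σ ∧ sat F₀ V₀ w₀ θ ∧
      (sat (F t) (V t) (w t) θ → ModalEquiv σ F₀ V₀ w₀ (F t) (V t) (w t)) := by
    intro t
    by_cases hequiv : ModalEquiv σ F₀ V₀ w₀ (F t) (V t) (w t)
    · exact ⟨.top, by simp [MForm.sig], trivial, fun _ => hequiv⟩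
    obtain ⟨θ, hθ, hne⟩ : ∃ θ : MForm ℕ, θ.sig ⊆ σ ∧ ¬(sat F₀ V₀ w₀ θ ↔ _) := by
      simpa [ModalEquiv] using hequiv
    by_cases h₀ : sat F₀ V₀ w₀ θ
    · exact ⟨θ, hθ, h₀, fun ht => (hne (iff_of_true h₀ ht)).elim⟩
    · exact ⟨.neg θ, hθ, h₀, fun ht => (hne (iff_of_false h₀ ht)).elim⟩
  choose θ hθσ hθ₀ hθ using separate
  have := Fintype.ofFinite T
  refine ⟨bigAnd (Finset.univ.toList.map θ), sig_bigAnd_subset ?_, ?_, fun t ht => ?_⟩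
  · simpa using hθσ
  · simpa [sat_bigAnd] using hθ₀
  · exact hθ t (sat_bigAnd.mp ht _ (List.mem_map_of_mem (by simp)))

theorem exists_formula_sat_iff_exists_modalEquiv (σ : Finset ℕ) {T : Type} [Finite T] (F : T → Frame)
    (V : ∀ t, (F t).W → ℕ → Prop) (w : ∀ t, (F t).W) (P : T → Prop) :
    ∃ ψ : MForm ℕ, ψ.sig ⊆ σ ∧ ∀ s, sat (F s) (V s) (w s) ψ ↔
      ∃ t, P t ∧ ModalEquiv σ (F t) (V t) (w t) (F s) (V s) (w s) := by
  classical
  choose γ hγσ hγ hγequiv using fun t => exists_separating_formula σ F V w (F t) (V t) (w t)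
  have := Fintype.ofFinite T
  refine ⟨bigOr ((Finset.univ.filter P).toList.map γ), sig_bigOr_subset (by simpa using fun t (_ : P t) => hγσ t),
    fun s => ?_⟩
  simp only [sat_bigOr, List.mem_map, Finset.mem_toList, Finset.mem_filter, Finset.mem_univ,
    true_and]
  constructor
  · rintro ⟨_, ⟨t, hPt, rfl⟩, hs⟩
    exact ⟨t, hPt, hγequiv t s hs⟩
  · rintro ⟨t, hPt, hts⟩
    exact ⟨γ t, ⟨t, hPt, rfl⟩, (hts _ (hγσ t)).mp (hγ t)⟩

theorem ModalEquiv.exists_rel {σ : Finset ℕ} {F₁ F₂ : Frame} [Finite F₂.W]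
    {V₁ : F₁.W → ℕ → Prop} {V₂ : F₂.W → ℕ → Prop} {w₁ v₁ : F₁.W} {w₂ : F₂.W}
    (h : ModalEquiv σ F₁ V₁ w₁ F₂ V₂ w₂) (hv₁ : F₁.R w₁ v₁) :
    ∃ v₂, F₂.R w₂ v₂ ∧ ModalEquiv σ F₁ V₁ v₁ F₂ V₂ v₂ := by
  obtain ⟨γ, hγσ, hγ, hγequiv⟩ := exists_separating_formula σ (T := {v₂ // F₂.R w₂ v₂})
    (fun _ => F₂) (fun _ => V₂) Subtype.val F₁ V₁ v₁
  obtain ⟨v₂, hv₂, hγv₂⟩ := sat_dia.mp ((h γ.dia hγσ).mp (sat_dia.mpr ⟨v₁, hv₁, hγ⟩))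
  exact ⟨v₂, hv₂, hγequiv ⟨v₂, hv₂⟩ hγv₂⟩

/-- Hennessy–Milner theorem for finite models. -/
theorem bisim_iff_modalEquiv {σ : Finset ℕ} {F₁ F₂ : Frame} [Finite F₁.W] [Finite F₂.W]
    {V₁ : F₁.W → ℕ → Prop} {V₂ : F₂.W → ℕ → Prop} {w₁ : F₁.W} {w₂ : F₂.W} :
    Bisim σ F₁ V₁ w₁ F₂ V₂ w₂ ↔ ModalEquiv σ F₁ V₁ w₁ F₂ V₂ w₂ := by
  refine ⟨Bisim.modalEquiv, fun h => ⟨(ModalEquiv σ F₁ V₁ · F₂ V₂ ·), ⟨?_, ?_, ?_⟩, h⟩⟩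
  · intro w₁ w₂ hw p hp
    exact hw (.atom p) (by simpa [MForm.sig] using hp)
  · exact fun _ _ _ hw hv₁ => hw.exists_rel hv₁
  · intro _ _ _ hw hv₂
    obtain ⟨v₁, hv₁, hv⟩ := hw.symm.exists_rel hv₂
    exact ⟨v₁, hv₁, hv.symm⟩

def extendVal (σ : Finset ℕ) {W : Type} (b : W → σ → Prop) : W → ℕ → Prop :=
  fun w p => ∃ h : p ∈ σ, b w ⟨p, h⟩

theorem modalEquiv_extendVal {σ : Finset ℕ} {F : Frame} (V : F.W → ℕ → Prop) (w : F.W) :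
    ModalEquiv σ F (extendVal σ fun w p => V w p) w F V w :=
  fun _ hθ => (isBisim_eq_of_agreeOn fun _ _ hp => ⟨fun ⟨_, h⟩ => h, fun h => ⟨hp, h⟩⟩).sat_iff
    hθ rfl

section StrongestImplicate

variable {ι : Type} {Fr : ι → PFrame} {σ : Finset ℕ} {φ χ : MForm ℕ}

theorem sat_of_strImp_of_bisim (h : StrImp (Log (Set.range Fr)) σ φ χ) {i j : ι}
    {V : (Fr i).W → ℕ → Prop} {V' : (Fr j).W → ℕ → Prop}
    (hbisim : Bisim σ (Fr j).toFrame V' (Fr j).pt (Fr i).toFrame V (Fr i).pt)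
    (hφ : sat (Fr j).toFrame V' (Fr j).pt φ) : sat (Fr i).toFrame V (Fr i).pt χ :=
  (hbisim.modalEquiv χ h.1).mp (sat_imp.mp (mem_log_range_iff.mp h.2.1 j V') hφ)

theorem exists_bisim_of_strImp [Finite ι] (hfin : ∀ i, Finite (Fr i).W)
    (h : StrImp (Log (Set.range Fr)) σ φ χ) {i : ι} {V : (Fr i).W → ℕ → Prop}
    (hχ : sat (Fr i).toFrame V (Fr i).pt χ) :
    ∃ j, ∃ V' : (Fr j).W → ℕ → Prop,
      Bisim σ (Fr j).toFrame V' (Fr j).pt (Fr i).toFrame V (Fr i).pt ∧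
      sat (Fr j).toFrame V' (Fr j).pt φ := by
  -- the models of the family, up to their `σ`-reduct
  let T := Σ j : ι, ((Fr j).W → σ → Prop)
  let M (t : T) := extendVal σ t.2
  let reduct {j : ι} (V : (Fr j).W → ℕ → Prop) : T := ⟨j, fun w p => V w p⟩
  obtain ⟨ψ, hψσ, hψ⟩ := exists_formula_sat_iff_exists_modalEquiv σ (T := T) (fun t => (Fr t.1).toFrame) M
    (fun t => (Fr t.1).pt) fun t => ∃ V' : (Fr t.1).W → ℕ → Prop,
      ModalEquiv σ (Fr t.1).toFrame V' (Fr t.1).pt (Fr t.1).toFrame (M t) (Fr t.1).pt ∧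
      sat (Fr t.1).toFrame V' (Fr t.1).pt φ
  have hφψ : φ.imp ψ ∈ Log (Set.range Fr) := by
    refine mem_log_range_iff.mpr fun j V₀ => sat_imp.mpr fun hφ => ?_
    have hψ₀ := (hψ (reduct V₀)).mpr
      ⟨reduct V₀, ⟨V₀, (modalEquiv_extendVal V₀ _).symm, hφ⟩, ModalEquiv.refl⟩
    exact (modalEquiv_extendVal V₀ _ ψ hψσ).mp hψ₀
  have hψi := sat_imp.mp (mem_log_range_iff.mp (h.2.2 ψ hψσ hφψ) i V) hχ
  obtain ⟨⟨j, b⟩, ⟨V', hV', hφ⟩, hequiv⟩ :=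
    (hψ (reduct V)).mp (((modalEquiv_extendVal V _) ψ hψσ).mpr hψi)
  have := hfin i
  have := hfin j
  exact ⟨j, V', bisim_iff_modalEquiv.mpr (hV'.trans (hequiv.trans (modalEquiv_extendVal V _))),
    hφ⟩

theorem strImp_of_forall_sat_iff_exists_bisim (hχσ : χ.sig ⊆ σ)
    (H : ∀ i, ∀ V : (Fr i).W → ℕ → Prop,
      (sat (Fr i).toFrame V (Fr i).pt χ ↔
        ∃ j, ∃ V' : (Fr j).W → ℕ → Prop,
          Bisim σ (Fr j).toFrame V' (Fr j).pt (Fr i).toFrame V (Fr i).pt ∧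
          sat (Fr j).toFrame V' (Fr j).pt φ)) :
    StrImp (Log (Set.range Fr)) σ φ χ := by
  refine ⟨hχσ, mem_log_range_iff.mpr fun i V => sat_imp.mpr fun hφ =>
    (H i V).mpr ⟨i, V, bisim_refl V _, hφ⟩, fun ψ hψσ hφψ => ?_⟩
  refine mem_log_range_iff.mpr fun i V => sat_imp.mpr fun hχ => ?_
  obtain ⟨j, V', hbisim, hφ⟩ := (H i V).mp hχ
  exact (hbisim.modalEquiv ψ hψσ).mp (sat_imp.mp (mem_log_range_iff.mp hφψ j V') hφ)

end StrongestImplicate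

theorem stmt1_general {ι : Type} [Fintype ι] (Fr : ι → PFrame) (hfin : ∀ i, Finite (Fr i).W)
    (L : Set (MForm ℕ)) (hL : L = Log (Set.range Fr))
    (φ : MForm ℕ) (σ : Finset ℕ)
    (χ : MForm ℕ) (hχσ : χ.sig ⊆ σ) :
    StrImp L σ φ χ ↔
      ∀ i, ∀ V : (Fr i).W → ℕ → Prop,
        (sat (Fr i).toFrame V (Fr i).pt χ ↔
          ∃ j, ∃ V' : (Fr j).W → ℕ → Prop,
            Bisim σ (Fr j).toFrame V' (Fr j).pt (Fr i).toFrame V (Fr i).pt ∧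
            sat (Fr j).toFrame V' (Fr j).pt φ) := by
  subst hL
  refine ⟨fun h i V => ⟨exists_bisim_of_strImp hfin h, ?_⟩,
    strImp_of_forall_sat_iff_exists_bisim hχσ⟩
  rintro ⟨j, V', hbisim, hφ⟩
  exact sat_of_strImp_of_bisim h hbisim hφ

/-- bisimulation characterization of strongest implicates for logics determined
by a finite set of finite pointed frames (given as a finite family `Fr : ι → PFrame`). -/
theorem stmt1 {ι : Type} [Fintype ι] (Fr : ι → PFrame) (hfin : ∀ i, Finite (Fr i).W)
    (L : Set (MForm ℕ)) (hL : L = Log (Set.range Fr))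
    (φ : MForm ℕ) (σ : Finset ℕ) (hσ : σ ⊆ φ.sig)
    (χ : MForm ℕ) (hχσ : χ.sig ⊆ σ) :
    StrImp L σ φ χ ↔
      ∀ i, ∀ V : (Fr i).W → ℕ → Prop,
        (sat (Fr i).toFrame V (Fr i).pt χ ↔
          ∃ j, ∃ V' : (Fr j).W → ℕ → Prop,
            Bisim σ (Fr j).toFrame V' (Fr j).pt (Fr i).toFrame V (Fr i).pt ∧
            sat (Fr j).toFrame V' (Fr j).pt φ) :=
  stmt1_general Fr hfin L hL φ σ χ hχσ
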